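/- arXiv:1302.5732 — 3 statements merged into one kernel-verified Lean document; each statement's English description precedes it below -/
import Mathlib

section
/- Define the operator T₀ on L²([0,1], r dr) by (T₀f)(s) = −(1/s)∫₀^s f(r) r dr + (s/(1−s²)) ∫_s^1 f(r) r dr for 0 < s < 1. Then ∫₀¹ |(T₀f)(s)|² s ds ≤ (9/2) ∫₀¹ |f(r)|² r dr for all f ∈ L²([0,1], r dr). -/
open MeasureTheory

/-- The operator `T₀` of Lemma 3. -/
noncomputable def T0 (f : ℝ → ℂ) (s : ℝ) : ℂ :=
  -(1 / (s:ℂ)) * (∫ r in Set.Ioc (0:ℝ) s, f r * (r:ℂ)) +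
    ((s:ℂ) / (1 - (s:ℂ) ^ 2)) * ∫ r in Set.Ioc s 1, f r * (r:ℂ)

/-!
Write `T₀ f s = -X(s)/s + s Y(s)/(1-s²)` with `X(s) = ∫₀ˢ f r r dr`, `Y(s) = ∫ₛ¹ f r r dr`.
Cauchy–Schwarz gives `|X(s)|² ≤ ‖f‖² s²/2`, and, against the weight `r/√(1-r²)` whose integral
over `(s, 1]` is `√(1-s²)`, also `|Y(s)|² ≤ √(1-s²) ∫ₛ¹ |f r|² r √(1-r²) dr`. Hence
`|T₀ f s|² s ≤ ‖f‖² s + 2 s³ (1-s²)^(-3/2) ∫ₛ¹ |f r|² r √(1-r²) dr`. After integrating in `s`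
and swapping the order of integration, the second term is `2 ∫₀¹ |f r|² r (1-√(1-r²))² dr`,
because `∫₀ʳ s³ (1-s²)^(-3/2) ds = (1-√(1-r²))² / √(1-r²)`; so it is at most `2‖f‖²`, and
altogether `‖T₀ f‖² ≤ (5/2) ‖f‖²`.
-/

open Set

theorem sq_norm_integral_le_integral_div_mul_integral {α E : Type*} [MeasurableSpace α]
    {μ : Measure α} [NormedAddCommGroup E] [NormedSpace ℝ E] {g : α → E} {w : α → ℝ}
    (hw : ∀ᵐ x ∂μ, 0 < w x) (hgw : Integrable (fun x => ‖g x‖ ^ 2 / w x) μ)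
    (hwi : Integrable w μ) :
    ‖∫ x, g x ∂μ‖ ^ 2 ≤ (∫ x, ‖g x‖ ^ 2 / w x ∂μ) * ∫ x, w x ∂μ := by
  set u : α → ℝ := fun x => √(‖g x‖ ^ 2 / w x)
  set v : α → ℝ := fun x => √(w x)
  have hA : 0 ≤ ∫ x, ‖g x‖ ^ 2 / w x ∂μ :=
    integral_nonneg_of_ae (by filter_upwards [hw] with x hx; positivity)
  have hB : 0 ≤ ∫ x, w x ∂μ := integral_nonneg_of_ae (by filter_upwards [hw] with x hx; exact hx.le)
  have hu : MemLp u (ENNReal.ofReal 2) μ := by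
    rw [ENNReal.ofReal_ofNat]
    refine (memLp_two_iff_integrable_sq
      (Real.continuous_sqrt.comp_aestronglyMeasurable hgw.1)).2 (hgw.congr ?_)
    filter_upwards [hw] with x hx
    exact (Real.sq_sqrt (by positivity)).symm
  have hv : MemLp v (ENNReal.ofReal 2) μ := by
    rw [ENNReal.ofReal_ofNat]
    refine (memLp_two_iff_integrable_sq
      (Real.continuous_sqrt.comp_aestronglyMeasurable hwi.1)).2 (hwi.congr ?_)
    filter_upwards [hw] with x hx
    exact (Real.sq_sqrt hx.le).symm
  have huv : ∫ x, ‖g x‖ ∂μ = ∫ x, u x * v x ∂μ := by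
    refine integral_congr_ae ?_
    filter_upwards [hw] with x hx
    rw [← Real.sqrt_mul (by positivity), div_mul_cancel₀ _ hx.ne', Real.sqrt_sq (norm_nonneg _)]
  have hu2 : ∫ x, u x ^ (2 : ℝ) ∂μ = ∫ x, ‖g x‖ ^ 2 / w x ∂μ := by
    refine integral_congr_ae ?_
    filter_upwards [hw] with x hx
    rw [Real.rpow_two, Real.sq_sqrt (by positivity)]
  have hv2 : ∫ x, v x ^ (2 : ℝ) ∂μ = ∫ x, w x ∂μ := by
    refine integral_congr_ae ?_
    filter_upwards [hw] with x hx
    rw [Real.rpow_two, Real.sq_sqrt hx.le]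
  have holder := integral_mul_le_Lp_mul_Lq_of_nonneg Real.HolderConjugate.two_two
    (.of_forall fun x => Real.sqrt_nonneg _) (.of_forall fun x => Real.sqrt_nonneg _) hu hv
  rw [hu2, hv2, ← huv, ← Real.sqrt_eq_rpow, ← Real.sqrt_eq_rpow, ← Real.sqrt_mul hA] at holder
  calc ‖∫ x, g x ∂μ‖ ^ 2 ≤ (∫ x, ‖g x‖ ∂μ) ^ 2 :=
        pow_le_pow_left₀ (norm_nonneg _) (norm_integral_le_integral_norm _) 2
    _ ≤ _ := (Real.le_sqrt (integral_nonneg fun x => norm_nonneg _) (mul_nonneg hA hB)).1 holder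

theorem ae_restrict_Ioc_mem_Ioo {μ : Measure ℝ} [NullSingletonClass μ] (a b : ℝ) :
    ∀ᵐ x ∂μ.restrict (Ioc a b), x ∈ Ioo a b :=
  (ae_restrict_congr_set Ioo_ae_eq_Ioc).1 (ae_restrict_mem measurableSet_Ioo)

theorem restrict_Ioc_restrict_Iio {μ : Measure ℝ} {a b r : ℝ} (hr : r ≤ b) :
    (μ.restrict (Ioc a b)).restrict (Iio r) = μ.restrict (Ioo a r) := by
  rw [Measure.restrict_restrict measurableSet_Iio]
  congr 1
  ext x; simp only [mem_inter_iff, mem_Iio, mem_Ioc, mem_Ioo]; grind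

theorem restrict_Ioc_restrict_Ioi {μ : Measure ℝ} {a b s : ℝ} (hs : a ≤ s) :
    (μ.restrict (Ioc a b)).restrict (Ioi s) = μ.restrict (Ioc s b) := by
  rw [Measure.restrict_restrict measurableSet_Ioi]
  congr 1
  ext x; simp only [mem_inter_iff, mem_Ioi, mem_Ioc]; grind

theorem integrableOn_and_integral_mul_setIntegral_Ioc_swap {ψ φ : ℝ → ℝ} {a b : ℝ}
    (hψm : AEStronglyMeasurable ψ (volume.restrict (Ioc a b)))
    (hφm : AEStronglyMeasurable φ (volume.restrict (Ioc a b)))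
    (hψ0 : ∀ s ∈ Ioc a b, 0 ≤ ψ s) (hφ0 : ∀ r ∈ Ioc a b, 0 ≤ φ r)
    (hψi : ∀ r ∈ Ioo a b, IntegrableOn ψ (Ioc a r))
    (hint : IntegrableOn (fun r => φ r * ∫ s in Ioc a r, ψ s) (Ioc a b)) :
    IntegrableOn (fun s => ψ s * ∫ r in Ioc s b, φ r) (Ioc a b) ∧
      ∫ s in Ioc a b, ψ s * ∫ r in Ioc s b, φ r = ∫ r in Ioc a b, φ r * ∫ s in Ioc a r, ψ s := by
  set μ := volume.restrict (Ioc a b)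
  set F : ℝ × ℝ → ℝ := {q | q.1 < q.2}.indicator fun q => ψ q.1 * φ q.2
  have hFm : AEStronglyMeasurable F (μ.prod μ) :=
    (hψm.comp_fst.mul hφm.comp_snd).indicator (measurableSet_lt measurable_fst measurable_snd)
  have hF0 : ∀ s ∈ Ioc a b, ∀ r ∈ Ioc a b, 0 ≤ F (s, r) := fun s hs r hr =>
    indicator_nonneg (fun _ _ => mul_nonneg (hψ0 s hs) (hφ0 r hr)) _
  have hsection_left : ∀ r ∈ Ioo a b, Integrable (fun s => F (s, r)) μ ∧
      ∫ s, F (s, r) ∂μ = φ r * ∫ s in Ioc a r, ψ s := by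
    intro r hr
    have hsection : (fun s => F (s, r)) = (Iio r).indicator fun s => ψ s * φ r := rfl
    rw [hsection, integrable_indicator_iff measurableSet_Iio, integral_indicator measurableSet_Iio,
      IntegrableOn, restrict_Ioc_restrict_Iio hr.2.le, integral_Ioc_eq_integral_Ioo,
      integral_mul_const, mul_comm]
    exact ⟨((hψi r hr).mono_set Ioo_subset_Ioc_self).mul_const _, rfl⟩
  have hsection_right : ∀ s ∈ Ioc a b, ∫ r, F (s, r) ∂μ = ψ s * ∫ r in Ioc s b, φ r := by
    intro s hs
    have hsection : (fun r => F (s, r)) = (Ioi s).indicator fun r => ψ s * φ r := rfl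
    rw [hsection, integral_indicator measurableSet_Ioi, restrict_Ioc_restrict_Ioi hs.1.le,
      integral_const_mul]
  have hleft : (fun r => ∫ s, F (s, r) ∂μ) =ᵐ[μ] fun r => φ r * ∫ s in Ioc a r, ψ s := by
    filter_upwards [ae_restrict_Ioc_mem_Ioo a b] with r hr
    exact (hsection_left r hr).2
  have hright : (fun s => ∫ r, F (s, r) ∂μ) =ᵐ[μ] fun s => ψ s * ∫ r in Ioc s b, φ r := by
    filter_upwards [ae_restrict_mem measurableSet_Ioc] with s hs
    exact hsection_right s hs
  have hFi : Integrable F (μ.prod μ) := by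
    refine (integrable_prod_iff' hFm).2
      ⟨(ae_restrict_Ioc_mem_Ioo a b).mono fun r hr => (hsection_left r hr).1, hint.congr ?_⟩
    filter_upwards [ae_restrict_Ioc_mem_Ioo a b, hleft] with r hr hr'
    rw [← hr']
    refine integral_congr_ae ?_
    filter_upwards [ae_restrict_mem measurableSet_Ioc] with s hs
    exact (Real.norm_of_nonneg (hF0 s hs r (Ioo_subset_Ioc_self hr))).symm
  refine ⟨hFi.integral_prod_left.congr hright, ?_⟩
  rw [← integral_congr_ae hright, ← integral_congr_ae hleft]
  exact integral_integral_swap (f := fun s r => F (s, r)) hFi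

theorem integrableOn_and_integral_Ioc_of_hasDerivAt_of_nonneg {g g' : ℝ → ℝ} {a b : ℝ}
    (hab : a ≤ b) (hcont : ContinuousOn g (Icc a b))
    (hderiv : ∀ x ∈ Ioo a b, HasDerivAt g (g' x) x) (hpos : ∀ x ∈ Ioo a b, 0 ≤ g' x) :
    IntegrableOn g' (Ioc a b) ∧ ∫ x in Ioc a b, g' x = g b - g a := by
  have hint := intervalIntegral.integrableOn_deriv_of_nonneg hcont hderiv hpos
  refine ⟨hint, ?_⟩
  rw [← intervalIntegral.integral_of_le hab]
  exact intervalIntegral.integral_eq_sub_of_hasDerivAt_of_le hab hcont hderiv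
    ((intervalIntegrable_iff_integrableOn_Ioc_of_le hab).2 hint)

theorem hasDerivAt_sqrt_one_sub_sq {x : ℝ} (hx : x ^ 2 < 1) :
    HasDerivAt (fun r => √(1 - r ^ 2)) (-x / √(1 - x ^ 2)) x := by
  have h := ((hasDerivAt_pow 2 x).const_sub 1).sqrt (by linarith)
  convert h using 1
  have : √(1 - x ^ 2) ≠ 0 := (Real.sqrt_pos.2 (by linarith)).ne'
  field_simp
  ring

theorem integrableOn_and_integral_Ioc_div_sqrt_one_sub_sq {s : ℝ} (hs0 : 0 ≤ s) (hs1 : s ≤ 1) :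
    IntegrableOn (fun r => r / √(1 - r ^ 2)) (Ioc s 1) ∧
      ∫ r in Ioc s 1, r / √(1 - r ^ 2) = √(1 - s ^ 2) := by
  have h := integrableOn_and_integral_Ioc_of_hasDerivAt_of_nonneg (g := fun r => -√(1 - r ^ 2))
    (g' := fun r => r / √(1 - r ^ 2)) hs1 (by fun_prop) (fun x hx => ?_)
    (fun x hx => div_nonneg (hs0.trans hx.1.le) (Real.sqrt_nonneg _))
  · simpa using h
  · have := (hasDerivAt_sqrt_one_sub_sq (x := x) (by nlinarith [hx.1, hx.2])).fun_neg
    simpa [neg_div] using this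

theorem integrableOn_and_integral_Ioc_cube_div_one_sub_sq_mul_sqrt {r : ℝ}
    (hr0 : 0 ≤ r) (hr1 : r < 1) :
    IntegrableOn (fun s => s ^ 3 / ((1 - s ^ 2) * √(1 - s ^ 2))) (Ioc 0 r) ∧
      ∫ s in Ioc 0 r, s ^ 3 / ((1 - s ^ 2) * √(1 - s ^ 2))
        = 1 / √(1 - r ^ 2) + √(1 - r ^ 2) - 2 := by
  have hlt : ∀ x ∈ Icc 0 r, 0 < 1 - x ^ 2 := fun x hx => by nlinarith [hx.1, hx.2]
  have h := integrableOn_and_integral_Ioc_of_hasDerivAt_of_nonneg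
    (g := fun s => (√(1 - s ^ 2))⁻¹ + √(1 - s ^ 2))
    (g' := fun s => s ^ 3 / ((1 - s ^ 2) * √(1 - s ^ 2))) hr0 ?_ (fun x hx => ?_) (fun x hx => ?_)
  · exact ⟨h.1, h.2.trans (by norm_num)⟩
  · refine ContinuousOn.add (ContinuousOn.inv₀ (by fun_prop) fun x hx => ?_) (by fun_prop)
    exact (Real.sqrt_pos.2 (hlt x hx)).ne'
  · have h1 := hlt x (Ioo_subset_Icc_self hx)
    have hsq := Real.sq_sqrt h1.le
    have hpos := Real.sqrt_pos.2 h1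
    have hd := hasDerivAt_sqrt_one_sub_sq (x := x) (by linarith)
    refine ((hd.fun_inv hpos.ne').fun_add hd).congr_deriv ?_
    field_simp
    rw [hsq]; ring
  · have h1 := hlt x (Ioo_subset_Icc_self hx)
    have := hx.1
    positivity

theorem sq_norm_setIntegral_Ioc_zero_mul_le (f : ℝ → ℂ) {s : ℝ} (hs : 0 ≤ s)
    (hf : IntegrableOn (fun r => ‖f r‖ ^ 2 * r) (Ioc 0 s)) :
    ‖∫ r in Ioc 0 s, f r * r‖ ^ 2 ≤ (∫ r in Ioc 0 s, ‖f r‖ ^ 2 * r) * (s ^ 2 / 2) := by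
  have hweight : ∀ r ∈ Ioc (0 : ℝ) s, ‖f r * r‖ ^ 2 / r = ‖f r‖ ^ 2 * r := fun r hr => by
    rw [norm_mul, Complex.norm_real, Real.norm_of_nonneg hr.1.le]
    field_simp [hr.1.ne']
  have hid : ∫ r in Ioc 0 s, r = s ^ 2 / 2 := by
    rw [← intervalIntegral.integral_of_le hs, integral_id]; ring
  have h := sq_norm_integral_le_integral_div_mul_integral (g := fun r => f r * (r : ℂ))
    (w := fun r => r) ((ae_restrict_mem measurableSet_Ioc).mono fun r hr => hr.1)
    (hf.congr_fun (fun r hr => (hweight r hr).symm) measurableSet_Ioc)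
    continuous_id.integrableOn_Ioc
  rwa [setIntegral_congr_fun measurableSet_Ioc hweight, hid] at h

theorem sq_norm_setIntegral_Ioc_one_mul_le (f : ℝ → ℂ) {s : ℝ} (hs0 : 0 ≤ s) (hs1 : s ≤ 1)
    (hf : IntegrableOn (fun r => ‖f r‖ ^ 2 * r * √(1 - r ^ 2)) (Ioc s 1)) :
    ‖∫ r in Ioc s 1, f r * r‖ ^ 2
      ≤ (∫ r in Ioc s 1, ‖f r‖ ^ 2 * r * √(1 - r ^ 2)) * √(1 - s ^ 2) := by
  have hweight : ∀ r ∈ Ioc s 1, ‖f r * r‖ ^ 2 / (r / √(1 - r ^ 2))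
      = ‖f r‖ ^ 2 * r * √(1 - r ^ 2) := fun r hr => by
    have hr0 : 0 < r := hs0.trans_lt hr.1
    rw [norm_mul, Complex.norm_real, Real.norm_of_nonneg hr0.le, div_div_eq_mul_div]
    field_simp
  have hpos : ∀ᵐ r ∂volume.restrict (Ioc s 1), 0 < r / √(1 - r ^ 2) := by
    filter_upwards [ae_restrict_Ioc_mem_Ioo s 1] with r hr
    exact div_pos (hs0.trans_lt hr.1) (Real.sqrt_pos.2 (by nlinarith [hr.1, hr.2]))
  obtain ⟨hint, hval⟩ := integrableOn_and_integral_Ioc_div_sqrt_one_sub_sq hs0 hs1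
  have h := sq_norm_integral_le_integral_div_mul_integral (g := fun r => f r * (r : ℂ))
    hpos (hf.congr_fun (fun r hr => (hweight r hr).symm) measurableSet_Ioc) hint
  rwa [setIntegral_congr_fun measurableSet_Ioc hweight, hval] at h

theorem integrableOn_norm_sq_mul_mul_sqrt (f : ℝ → ℂ)
    (hf : IntegrableOn (fun r => ‖f r‖ ^ 2 * r) (Ioc 0 1)) :
    IntegrableOn (fun r => ‖f r‖ ^ 2 * r * √(1 - r ^ 2)) (Ioc 0 1) :=
  hf.mul_bdd (by fun_prop) (.of_forall fun r => by
    rw [Real.norm_of_nonneg (Real.sqrt_nonneg _)]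
    exact Real.sqrt_le_one.2 (by nlinarith))

theorem sq_norm_T0_mul_le (f : ℝ → ℂ) (hf : IntegrableOn (fun r => ‖f r‖ ^ 2 * r) (Ioc 0 1))
    {s : ℝ} (hs0 : 0 < s) (hs1 : s < 1) :
    ‖T0 f s‖ ^ 2 * s ≤ (∫ r in Ioc 0 1, ‖f r‖ ^ 2 * r) * s
      + 2 * (s ^ 3 / ((1 - s ^ 2) * √(1 - s ^ 2))
        * ∫ r in Ioc s 1, ‖f r‖ ^ 2 * r * √(1 - r ^ 2)) := by
  set I := ∫ r in Ioc 0 1, ‖f r‖ ^ 2 * r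
  set G := ∫ r in Ioc s 1, ‖f r‖ ^ 2 * r * √(1 - r ^ 2)
  set X := ∫ r in Ioc 0 s, f r * (r : ℂ)
  set Y := ∫ r in Ioc s 1, f r * (r : ℂ)
  set c := √(1 - s ^ 2)
  have hs2 : 0 < 1 - s ^ 2 := by nlinarith
  have hc2 : c ^ 2 = 1 - s ^ 2 := Real.sq_sqrt hs2.le
  have hX : ‖X‖ ^ 2 ≤ I * (s ^ 2 / 2) := by
    have hsub : Ioc 0 s ⊆ Ioc (0 : ℝ) 1 := Ioc_subset_Ioc_right hs1.le
    refine (sq_norm_setIntegral_Ioc_zero_mul_le f hs0.le (hf.mono_set hsub)).trans ?_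
    refine mul_le_mul_of_nonneg_right (setIntegral_mono_set hf ?_ hsub.eventuallyLE) (by positivity)
    filter_upwards [ae_restrict_mem measurableSet_Ioc] with r hr
    exact mul_nonneg (sq_nonneg _) hr.1.le
  have hY : ‖Y‖ ^ 2 ≤ G * c := sq_norm_setIntegral_Ioc_one_mul_le f hs0.le hs1.le
    ((integrableOn_norm_sq_mul_mul_sqrt f hf).mono_set (Ioc_subset_Ioc_left hs0.le))
  have hT : ‖T0 f s‖ ≤ ‖X‖ / s + s / (1 - s ^ 2) * ‖Y‖ := by
    have hcoef : ‖(s : ℂ) / (1 - (s : ℂ) ^ 2)‖ = s / (1 - s ^ 2) := by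
      rw [← Complex.ofReal_pow, ← Complex.ofReal_one, ← Complex.ofReal_sub, ← Complex.ofReal_div,
        Complex.norm_real, Real.norm_of_nonneg (div_nonneg hs0.le hs2.le)]
    refine (norm_add_le _ _).trans_eq ?_
    rw [norm_mul, norm_mul, hcoef, norm_neg, norm_div, norm_one, Complex.norm_real,
      Real.norm_of_nonneg hs0.le, one_div_mul_eq_div]
  have hT2 : ‖T0 f s‖ ^ 2 ≤ I + 2 * (s ^ 2 / ((1 - s ^ 2) * c) * G) := by
    calc ‖T0 f s‖ ^ 2 ≤ (‖X‖ / s + s / (1 - s ^ 2) * ‖Y‖) ^ 2 :=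
          pow_le_pow_left₀ (norm_nonneg _) hT 2
      _ ≤ 2 * ((‖X‖ / s) ^ 2 + (s / (1 - s ^ 2) * ‖Y‖) ^ 2) := add_sq_le
      _ = 2 * (‖X‖ ^ 2 / s ^ 2 + s ^ 2 / (1 - s ^ 2) ^ 2 * ‖Y‖ ^ 2) := by
          rw [mul_pow, div_pow, div_pow]
      _ ≤ 2 * (I * (s ^ 2 / 2) / s ^ 2 + s ^ 2 / (1 - s ^ 2) ^ 2 * (G * c)) := by gcongr
      _ = I + 2 * (s ^ 2 / ((1 - s ^ 2) * c) * G) := by rw [← hc2]; field_simp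
  calc ‖T0 f s‖ ^ 2 * s ≤ (I + 2 * (s ^ 2 / ((1 - s ^ 2) * c) * G)) * s := by gcongr
    _ = I * s + 2 * (s ^ 3 / ((1 - s ^ 2) * c) * G) := by ring

theorem integrableOn_and_integral_cube_div_mul_tail_le (f : ℝ → ℂ)
    (hf : IntegrableOn (fun r => ‖f r‖ ^ 2 * r) (Ioc 0 1)) :
    IntegrableOn (fun s => s ^ 3 / ((1 - s ^ 2) * √(1 - s ^ 2))
        * ∫ r in Ioc s 1, ‖f r‖ ^ 2 * r * √(1 - r ^ 2)) (Ioc 0 1) ∧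
      ∫ s in Ioc 0 1, s ^ 3 / ((1 - s ^ 2) * √(1 - s ^ 2))
          * ∫ r in Ioc s 1, ‖f r‖ ^ 2 * r * √(1 - r ^ 2)
        ≤ ∫ r in Ioc 0 1, ‖f r‖ ^ 2 * r := by
  have hswapped : (fun r => ‖f r‖ ^ 2 * r * √(1 - r ^ 2)
        * ∫ s in Ioc 0 r, s ^ 3 / ((1 - s ^ 2) * √(1 - s ^ 2)))
      =ᵐ[volume.restrict (Ioc 0 1)] fun r => ‖f r‖ ^ 2 * r * (1 - √(1 - r ^ 2)) ^ 2 := by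
    filter_upwards [ae_restrict_Ioc_mem_Ioo 0 1] with r hr
    have hc : 0 < √(1 - r ^ 2) := Real.sqrt_pos.2 (by nlinarith [hr.1, hr.2])
    rw [(integrableOn_and_integral_Ioc_cube_div_one_sub_sq_mul_sqrt hr.1.le hr.2).2]
    field_simp
    ring
  have hweight : ∀ r, (1 - √(1 - r ^ 2)) ^ 2 ≤ 1 := fun r => by
    have h1 : √(1 - r ^ 2) ≤ 1 := Real.sqrt_le_one.2 (by nlinarith)
    nlinarith [Real.sqrt_nonneg (1 - r ^ 2)]
  have hbound : IntegrableOn (fun r => ‖f r‖ ^ 2 * r * (1 - √(1 - r ^ 2)) ^ 2) (Ioc 0 1) :=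
    hf.mul_bdd (by fun_prop) (.of_forall fun r => by
      rw [Real.norm_of_nonneg (sq_nonneg _)]
      exact hweight r)
  obtain ⟨hint, heq⟩ := integrableOn_and_integral_mul_setIntegral_Ioc_swap
    (Measurable.aestronglyMeasurable (by fun_prop)) (integrableOn_norm_sq_mul_mul_sqrt f hf).1
    (fun s hs => have : 0 ≤ 1 - s ^ 2 := by nlinarith [hs.1, hs.2]
      have := hs.1; by positivity)
    (fun r hr => have := hr.1; by positivity)
    (fun r hr => (integrableOn_and_integral_Ioc_cube_div_one_sub_sq_mul_sqrt hr.1.le hr.2).1)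
    (hbound.congr hswapped.symm)
  refine ⟨hint, ?_⟩
  rw [heq, integral_congr_ae hswapped]
  refine setIntegral_mono_on hbound hf measurableSet_Ioc fun r hr => ?_
  simpa using mul_le_mul_of_nonneg_left (hweight r) (mul_nonneg (sq_nonneg ‖f r‖) hr.1.le)

theorem T0_bounded_general (f : ℝ → ℂ)
    (hf : IntegrableOn (fun r : ℝ => ‖f r‖ ^ 2 * r) (Set.Ioc (0:ℝ) 1)) :
    (∫ s in Set.Ioc (0:ℝ) 1, ‖T0 f s‖ ^ 2 * s)
      ≤ (9 / 2) * ∫ r in Set.Ioc (0:ℝ) 1, ‖f r‖ ^ 2 * r := by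
  have hI : 0 ≤ ∫ r in Ioc (0 : ℝ) 1, ‖f r‖ ^ 2 * r :=
    setIntegral_nonneg measurableSet_Ioc fun r hr => mul_nonneg (sq_nonneg _) hr.1.le
  by_cases hT : IntegrableOn (fun s => ‖T0 f s‖ ^ 2 * s) (Ioc 0 1)
  swap
  · rw [integral_undef hT]; positivity
  obtain ⟨hK, hKle⟩ := integrableOn_and_integral_cube_div_mul_tail_le f hf
  have hid : IntegrableOn (fun s : ℝ => s) (Ioc 0 1) := continuous_id.integrableOn_Ioc
  have hid_eq : ∫ s in Ioc (0 : ℝ) 1, s = 1 / 2 := by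
    rw [← intervalIntegral.integral_of_le zero_le_one, integral_id]; norm_num
  calc (∫ s in Ioc 0 1, ‖T0 f s‖ ^ 2 * s)
      ≤ ∫ s in Ioc 0 1, ((∫ r in Ioc 0 1, ‖f r‖ ^ 2 * r) * s
          + 2 * (s ^ 3 / ((1 - s ^ 2) * √(1 - s ^ 2))
            * ∫ r in Ioc s 1, ‖f r‖ ^ 2 * r * √(1 - r ^ 2))) := by
        refine integral_mono_ae hT ((hid.const_mul _).add (hK.const_mul 2)) ?_
        filter_upwards [ae_restrict_Ioc_mem_Ioo 0 1] with s hs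
        exact sq_norm_T0_mul_le f hf hs.1 hs.2
    _ ≤ (9 / 2) * ∫ r in Ioc 0 1, ‖f r‖ ^ 2 * r := by
        rw [integral_add (hid.const_mul _) (hK.const_mul 2), integral_const_mul,
          integral_const_mul, hid_eq]
        linarith

/-- `T₀` is bounded on `L²([0,1], r dr)` with `‖T₀ f‖² ≤ (9/2) ‖f‖²`. -/
theorem T0_bounded (f : ℝ → ℂ)
    (hfm : AEStronglyMeasurable f (volume.restrict (Set.Ioc (0:ℝ) 1)))
    (hf : IntegrableOn (fun r : ℝ => ‖f r‖ ^ 2 * r) (Set.Ioc (0:ℝ) 1)) :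
    (∫ s in Set.Ioc (0:ℝ) 1, ‖T0 f s‖ ^ 2 * s)
      ≤ (9 / 2) * ∫ r in Set.Ioc (0:ℝ) 1, ‖f r‖ ^ 2 * r :=
  T0_bounded_general f hf
end

section
/- For each integer l ≥ 1, define the operator T_l on L²([0,1], r dr) by (T_l f)(s) = (1/(1−s²)) ∫_s^1 (s/r)^{l−1} f(r) r dr for 0 < s < 1. Then ∫₀¹ |(T_l f)(s)|² s ds ≤ (9/4) ∫₀¹ |f(r)|² r dr for all f ∈ L²([0,1], r dr), with the bound independent of l. -/
/-!
Since `‖(s / r) ^ (l - 1)‖ ≤ 1`, it suffices to bound the positive operator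
`h ↦ (1 - s²)⁻¹ ∫_s^1 h(r) r dr` applied to `h = ‖f‖`, and its norm is in fact at most `1`.
This is a Schur test with weight `√(1 - r²)`: Cauchy–Schwarz against the measure
`r (1 - r²)^(-1/2) dr`, whose mass on `(s, 1)` is `√(1 - s²)`, gives
`s |T f(s)|² ≤ s (1 - s²)^(-3/2) ∫_s^1 |f(r)|² r √(1 - r²) dr`, and after exchanging the
integrals, `∫_0^r s (1 - s²)^(-3/2) ds ≤ (1 - r²)^(-1/2)` cancels the weight.
-/

open MeasureTheory Set
open scoped ENNReal

/-- The operator `T_l`, `l ≥ 1`, of Lemma 3. -/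
noncomputable def Tl (l : ℕ) (f : ℝ → ℂ) (s : ℝ) : ℂ :=
  (1 / (1 - (s:ℂ) ^ 2)) * ∫ r in Set.Ioc s 1, ((s / r : ℝ) : ℂ) ^ (l - 1) * f r * (r:ℂ)

theorem sq_lintegral_le_measure_univ_mul {α : Type*} [MeasurableSpace α] {μ : Measure α}
    {F : α → ℝ≥0∞} (hF : AEMeasurable F μ) :
    (∫⁻ a, F a ∂μ) ^ 2 ≤ μ univ * ∫⁻ a, F a ^ 2 ∂μ := by
  have h := ENNReal.lintegral_mul_le_Lp_mul_Lq μ Real.HolderConjugate.two_two hF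
    (aemeasurable_const (b := (1 : ℝ≥0∞)))
  simp only [Pi.mul_apply, mul_one, ENNReal.one_rpow, lintegral_const, one_mul] at h
  calc (∫⁻ a, F a ∂μ) ^ 2
      ≤ ((∫⁻ a, F a ^ (2 : ℝ) ∂μ) ^ (1 / 2 : ℝ) * μ univ ^ (1 / 2 : ℝ)) ^ 2 := by gcongr
    _ = μ univ * ∫⁻ a, F a ^ 2 ∂μ := by
      rw [mul_pow, ← ENNReal.rpow_natCast, ← ENNReal.rpow_natCast (μ univ ^ _),
        ← ENNReal.rpow_mul, ← ENNReal.rpow_mul]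
      norm_num [mul_comm]

theorem sq_lintegral_mul_le {α : Type*} [MeasurableSpace α] {μ : Measure α}
    {w F : α → ℝ≥0∞} (hw : AEMeasurable w μ) (hF : AEMeasurable F μ) :
    (∫⁻ a, w a * F a ∂μ) ^ 2 ≤ (∫⁻ a, w a ∂μ) * ∫⁻ a, w a * F a ^ 2 ∂μ := by
  have h := sq_lintegral_le_measure_univ_mul
    (hF.mono_ac (withDensity_absolutelyContinuous μ w))
  rwa [lintegral_withDensity_eq_lintegral_mul₀ hw hF,
    lintegral_withDensity_eq_lintegral_mul₀ hw (hF.pow_const 2),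
    withDensity_apply _ MeasurableSet.univ, Measure.restrict_univ] at h

theorem lintegral_mul_setLIntegral_Ioi_swap {α : Type*} [MeasurableSpace α] [TopologicalSpace α]
    [LinearOrder α] [OrderClosedTopology α] [SecondCountableTopology α] [OpensMeasurableSpace α]
    {μ : Measure α} [SFinite μ] {A B : α → ℝ≥0∞} (hA : AEMeasurable A μ) (hB : AEMeasurable B μ) :
    ∫⁻ s, A s * ∫⁻ r in Ioi s, B r ∂μ ∂μ = ∫⁻ r, B r * ∫⁻ s in Iio r, A s ∂μ ∂μ := by
  set K : α × α → ℝ≥0∞ := {p | p.1 < p.2}.indicator fun p => A p.1 * B p.2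
  have hK : AEMeasurable (Function.uncurry fun s r => K (s, r)) (μ.prod μ) :=
    ((hA.comp_quasiMeasurePreserving Measure.quasiMeasurePreserving_fst).mul
      (hB.comp_quasiMeasurePreserving Measure.quasiMeasurePreserving_snd)).indicator
      (measurableSet_lt measurable_fst measurable_snd)
  have hrow (s : α) : A s * ∫⁻ r in Ioi s, B r ∂μ = ∫⁻ r, K (s, r) ∂μ := by
    rw [← lintegral_const_mul'' _ hB.restrict, ← lintegral_indicator measurableSet_Ioi]
    rfl
  have hcol (r : α) : B r * ∫⁻ s in Iio r, A s ∂μ = ∫⁻ s, K (s, r) ∂μ := by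
    rw [← lintegral_const_mul'' _ hA.restrict, ← lintegral_indicator measurableSet_Iio]
    congr 1 with s
    simp only [K, indicator, mem_Iio, mem_ofPred_eq, mul_comm]
  simp_rw [hrow, hcol]
  exact lintegral_lintegral_swap hK

theorem lintegral_Ioo_ofReal_deriv_eq {F F' : ℝ → ℝ} {a b : ℝ} (hab : a ≤ b)
    (hcont : ContinuousOn F (Icc a b)) (hderiv : ∀ x ∈ Ioo a b, HasDerivAt F (F' x) x)
    (hnonneg : ∀ x ∈ Ioo a b, 0 ≤ F' x) :
    ∫⁻ x in Ioo a b, ENNReal.ofReal (F' x) = ENNReal.ofReal (F b - F a) := by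
  have hint : IntegrableOn F' (Ioc a b) :=
    intervalIntegral.integrableOn_deriv_of_nonneg hcont hderiv hnonneg
  rw [← ofReal_integral_eq_lintegral_ofReal
    (hint.mono_set Ioo_subset_Ioc_self) ((ae_restrict_mem measurableSet_Ioo).mono hnonneg),
    ← integral_Ioc_eq_integral_Ioo, ← intervalIntegral.integral_of_le hab,
    intervalIntegral.integral_eq_sub_of_hasDerivAt_of_le hab hcont hderiv
      ((intervalIntegrable_iff_integrableOn_Ioc_of_le hab).2 hint)]

theorem hasDerivAt_neg_sqrt_one_sub_sq {x : ℝ} (hx : x ∈ Ioo (-1 : ℝ) 1) :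
    HasDerivAt (fun x => -√(1 - x ^ 2)) (x / √(1 - x ^ 2)) x := by
  have hpos : 0 < 1 - x ^ 2 := by nlinarith [hx.1, hx.2]
  refine ((((hasDerivAt_id x).pow 2).const_sub 1).sqrt hpos.ne').neg.congr_deriv ?_
  simp only [id, Pi.pow_apply]
  field_simp [(Real.sqrt_pos.2 hpos).ne']
  ring

theorem hasDerivAt_inv_sqrt_one_sub_sq {x : ℝ} (hx : x ∈ Ioo (-1 : ℝ) 1) :
    HasDerivAt (fun x => (√(1 - x ^ 2))⁻¹) (x / ((1 - x ^ 2) * √(1 - x ^ 2))) x := by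
  have hpos : 0 < 1 - x ^ 2 := by nlinarith [hx.1, hx.2]
  have hsqrt : 0 < √(1 - x ^ 2) := Real.sqrt_pos.2 hpos
  refine ((((hasDerivAt_id x).pow 2).const_sub 1).sqrt hpos.ne').inv hsqrt.ne' |>.congr_deriv ?_
  simp only [id, Pi.pow_apply]
  rw [Real.sq_sqrt hpos.le]
  field_simp
  ring

theorem ofReal_norm_sq_mul {E : Type*} [NormedAddCommGroup E] (x : E) (t : ℝ) :
    ENNReal.ofReal (‖x‖ ^ 2 * t) = ‖x‖ₑ ^ 2 * ENNReal.ofReal t := by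
  rw [ENNReal.ofReal_mul (by positivity), ENNReal.ofReal_pow (norm_nonneg _), ofReal_norm]

theorem enorm_Tl_le (l : ℕ) (f : ℝ → ℂ) {s : ℝ} (hs : 0 ≤ s) (hs1 : s < 1) :
    ‖Tl l f s‖ₑ ≤ ENNReal.ofReal (1 - s ^ 2)⁻¹ * ∫⁻ r in Ioc s 1, ‖f r‖ₑ * ENNReal.ofReal r := by
  have henorm {x : ℝ} (hx : 0 ≤ x) : ‖(x : ℂ)‖ₑ = ENNReal.ofReal x := by
    rw [← ofReal_norm, Complex.norm_real, Real.norm_of_nonneg hx]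
  have hfactor : (1 / (1 - (s : ℂ) ^ 2)) = (((1 - s ^ 2)⁻¹ : ℝ) : ℂ) := by push_cast; ring
  rw [Tl, enorm_mul, hfactor, henorm (inv_nonneg.2 (by nlinarith))]
  gcongr
  refine (enorm_integral_le_lintegral_enorm _).trans (setLIntegral_mono' measurableSet_Ioc ?_)
  intro r ⟨hsr, _⟩
  have hr : 0 < r := hs.trans_lt hsr
  have hpow : ‖((s / r : ℝ) : ℂ) ^ (l - 1)‖ₑ ≤ 1 := by
    rw [enorm_pow, henorm (by positivity)]
    exact pow_le_one₀ zero_le (ENNReal.ofReal_le_one.2 ((div_le_one hr).2 hsr.le))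
  calc ‖((s / r : ℝ) : ℂ) ^ (l - 1) * f r * r‖ₑ
      = ‖((s / r : ℝ) : ℂ) ^ (l - 1)‖ₑ * (‖f r‖ₑ * ENNReal.ofReal r) := by
        rw [enorm_mul, enorm_mul, henorm hr.le, mul_assoc]
    _ ≤ ‖f r‖ₑ * ENNReal.ofReal r := mul_le_of_le_one_left zero_le hpow

theorem lintegral_Ioo_div_sqrt_one_sub_sq {s : ℝ} (hs : 0 ≤ s) (hs1 : s ≤ 1) :
    ∫⁻ r in Ioo s 1, ENNReal.ofReal (r / √(1 - r ^ 2)) = ENNReal.ofReal √(1 - s ^ 2) := by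
  rw [lintegral_Ioo_ofReal_deriv_eq hs1 (by fun_prop)
    (fun r hr => hasDerivAt_neg_sqrt_one_sub_sq ⟨by linarith [hr.1], hr.2⟩)
    (fun r hr => by have := hs.trans_lt hr.1; positivity)]
  norm_num

theorem lintegral_Ioo_div_one_sub_sq_mul_sqrt_le {r : ℝ} (hr : 0 ≤ r) (hr1 : r < 1) :
    ∫⁻ s in Ioo 0 r, ENNReal.ofReal (s / ((1 - s ^ 2) * √(1 - s ^ 2)))
      ≤ ENNReal.ofReal (√(1 - r ^ 2))⁻¹ := by
  have hderiv (x : ℝ) (hx : x ∈ Icc 0 r) :=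
    hasDerivAt_inv_sqrt_one_sub_sq (x := x) ⟨by linarith [hx.1], by linarith [hx.2]⟩
  rw [lintegral_Ioo_ofReal_deriv_eq hr
    (fun x hx => (hderiv x hx).continuousAt.continuousWithinAt)
    (fun x hx => hderiv x (Ioo_subset_Icc_self hx)) (fun x hx => ?_)]
  · gcongr
    norm_num
  · have : 0 < 1 - x ^ 2 := by nlinarith [hx.1, hx.2]
    have := hx.1.le
    positivity

theorem sq_lintegral_Ioc_mul_ofReal_le {h : ℝ → ℝ≥0∞} {s : ℝ} (hs : 0 ≤ s) (hs1 : s ≤ 1)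
    (hh : AEMeasurable h (volume.restrict (Ioc s 1))) :
    (∫⁻ r in Ioc s 1, h r * ENNReal.ofReal r) ^ 2
      ≤ ENNReal.ofReal √(1 - s ^ 2)
        * ∫⁻ r in Ioc s 1, h r ^ 2 * ENNReal.ofReal (r * √(1 - r ^ 2)) := by
  have hIoo (g : ℝ → ℝ≥0∞) : ∫⁻ r in Ioc s 1, g r = ∫⁻ r in Ioo s 1, g r :=
    setLIntegral_congr Ioo_ae_eq_Ioc.symm
  rw [hIoo, hIoo, ← lintegral_Ioo_div_sqrt_one_sub_sq hs hs1]
  set w : ℝ → ℝ≥0∞ := fun r => ENNReal.ofReal (r / √(1 - r ^ 2))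
  set F : ℝ → ℝ≥0∞ := fun r => h r * ENNReal.ofReal √(1 - r ^ 2)
  have hsqrt {r : ℝ} (hr : r ∈ Ioo s 1) : 0 < √(1 - r ^ 2) :=
    Real.sqrt_pos.2 (by nlinarith [hs.trans_lt hr.1, hr.2])
  have hwF : ∫⁻ r in Ioo s 1, h r * ENNReal.ofReal r = ∫⁻ r in Ioo s 1, w r * F r := by
    refine setLIntegral_congr_fun measurableSet_Ioo fun r hr => ?_
    have hr0 := (hs.trans_lt hr.1).le
    rw [mul_left_comm, ← ENNReal.ofReal_mul (by positivity), div_mul_cancel₀ _ (hsqrt hr).ne']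
  have hwF2 : ∫⁻ r in Ioo s 1, h r ^ 2 * ENNReal.ofReal (r * √(1 - r ^ 2))
      = ∫⁻ r in Ioo s 1, w r * F r ^ 2 := by
    refine setLIntegral_congr_fun measurableSet_Ioo fun r hr => ?_
    have hr0 := (hs.trans_lt hr.1).le
    rw [mul_pow, mul_left_comm, ← ENNReal.ofReal_pow (Real.sqrt_nonneg _),
      ← ENNReal.ofReal_mul (by positivity)]
    congr 2
    field_simp [(hsqrt hr).ne']
  rw [hwF, hwF2]
  exact sq_lintegral_mul_le (by fun_prop) ((hh.mono_set Ioo_subset_Ioc_self).mul (by fun_prop))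

theorem enorm_Tl_sq_mul_le (l : ℕ) {f : ℝ → ℂ} {s : ℝ} (hs : s ∈ Ioo 0 1)
    (hf : AEMeasurable (fun r => ‖f r‖ₑ) (volume.restrict (Ioc s 1))) :
    ‖Tl l f s‖ₑ ^ 2 * ENNReal.ofReal s
      ≤ ENNReal.ofReal (s / ((1 - s ^ 2) * √(1 - s ^ 2)))
        * ∫⁻ r in Ioc s 1, ‖f r‖ₑ ^ 2 * ENNReal.ofReal (r * √(1 - r ^ 2)) := by
  obtain ⟨hs0, hs1⟩ := hs
  have hpos : 0 < 1 - s ^ 2 := by nlinarith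
  have hsqrt : 0 < √(1 - s ^ 2) := Real.sqrt_pos.2 hpos
  calc ‖Tl l f s‖ₑ ^ 2 * ENNReal.ofReal s
      ≤ (ENNReal.ofReal (1 - s ^ 2)⁻¹ * ∫⁻ r in Ioc s 1, ‖f r‖ₑ * ENNReal.ofReal r) ^ 2
          * ENNReal.ofReal s := by
        gcongr
        exact enorm_Tl_le l f hs0.le hs1
    _ = ENNReal.ofReal (s / (1 - s ^ 2) ^ 2)
          * (∫⁻ r in Ioc s 1, ‖f r‖ₑ * ENNReal.ofReal r) ^ 2 := by
        rw [mul_pow, mul_right_comm, ← ENNReal.ofReal_pow (by positivity),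
          ← ENNReal.ofReal_mul (by positivity)]
        field_simp
    _ ≤ ENNReal.ofReal (s / (1 - s ^ 2) ^ 2) * (ENNReal.ofReal √(1 - s ^ 2)
          * ∫⁻ r in Ioc s 1, ‖f r‖ₑ ^ 2 * ENNReal.ofReal (r * √(1 - r ^ 2))) := by
        gcongr
        exact sq_lintegral_Ioc_mul_ofReal_le hs0.le hs1.le hf
    _ = _ := by
        rw [← mul_assoc, ← ENNReal.ofReal_mul (by positivity)]
        congr 2
        field_simp
        rw [Real.sq_sqrt hpos.le]

theorem lintegral_enorm_Tl_sq_le (l : ℕ) {f : ℝ → ℂ}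
    (hf : AEMeasurable (fun r => ‖f r‖ₑ) (volume.restrict (Ioc 0 1))) :
    ∫⁻ s in Ioc 0 1, ‖Tl l f s‖ₑ ^ 2 * ENNReal.ofReal s
      ≤ ∫⁻ r in Ioc 0 1, ‖f r‖ₑ ^ 2 * ENNReal.ofReal r := by
  have hIoo : ∀ᵐ x ∂volume.restrict (Ioc (0 : ℝ) 1), x ∈ Ioo (0 : ℝ) 1 := by
    rw [← Measure.restrict_congr_set Ioo_ae_eq_Ioc]
    exact ae_restrict_mem measurableSet_Ioo
  set μ := volume.restrict (Ioc (0 : ℝ) 1)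
  set W : ℝ → ℝ≥0∞ := fun s => ENNReal.ofReal (s / ((1 - s ^ 2) * √(1 - s ^ 2)))
  set G : ℝ → ℝ≥0∞ := fun r => ‖f r‖ₑ ^ 2 * ENNReal.ofReal (r * √(1 - r ^ 2))
  have hupper {s : ℝ} (hs : s ∈ Ioo (0 : ℝ) 1) :
      ∫⁻ r in Ioi s, G r ∂μ = ∫⁻ r in Ioc s 1, G r := by
    rw [Measure.restrict_restrict measurableSet_Ioi, inter_comm, Ioc_inter_Ioi,
      sup_of_le_right hs.1.le]
  have hlower {r : ℝ} (hr : r ∈ Ioo (0 : ℝ) 1) :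
      ∫⁻ s in Iio r, W s ∂μ = ∫⁻ s in Ioo 0 r, W s := by
    have hset : Iio r ∩ Ioc 0 1 = Ioo 0 r := by
      ext x
      simp only [mem_inter_iff, mem_Iio, mem_Ioc, mem_Ioo]
      grind
    rw [Measure.restrict_restrict measurableSet_Iio, hset]
  calc ∫⁻ s in Ioc 0 1, ‖Tl l f s‖ₑ ^ 2 * ENNReal.ofReal s
      ≤ ∫⁻ s, W s * ∫⁻ r in Ioi s, G r ∂μ ∂μ := by
        refine lintegral_mono_ae (hIoo.mono fun s hs => ?_)
        rw [hupper hs]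
        exact enorm_Tl_sq_mul_le l hs (hf.mono_set (Ioc_subset_Ioc_left hs.1.le))
    _ = ∫⁻ r, G r * ∫⁻ s in Iio r, W s ∂μ ∂μ :=
        lintegral_mul_setLIntegral_Ioi_swap (by fun_prop) ((hf.pow_const 2).mul (by fun_prop))
    _ ≤ ∫⁻ r in Ioc 0 1, ‖f r‖ₑ ^ 2 * ENNReal.ofReal r := by
        refine lintegral_mono_ae (hIoo.mono fun r hr => ?_)
        have hsqrt : 0 < √(1 - r ^ 2) := Real.sqrt_pos.2 (by nlinarith [hr.1, hr.2])
        calc G r * ∫⁻ s in Iio r, W s ∂μ ≤ G r * ENNReal.ofReal (√(1 - r ^ 2))⁻¹ := by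
              rw [hlower hr]
              gcongr
              exact lintegral_Ioo_div_one_sub_sq_mul_sqrt_le hr.1.le hr.2
          _ = ‖f r‖ₑ ^ 2 * ENNReal.ofReal r := by
              rw [mul_assoc, ← ENNReal.ofReal_mul (by have := hr.1.le; positivity),
                mul_inv_cancel_right₀ hsqrt.ne']

theorem Tl_pos_bounded_general (l : ℕ) (f : ℝ → ℂ)
    (hfm : AEStronglyMeasurable f (volume.restrict (Set.Ioc (0:ℝ) 1)))
    (hf : IntegrableOn (fun r : ℝ => ‖f r‖ ^ 2 * r) (Set.Ioc (0:ℝ) 1)) :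
    (∫ s in Set.Ioc (0:ℝ) 1, ‖Tl l f s‖ ^ 2 * s)
      ≤ (9 / 4) * ∫ r in Set.Ioc (0:ℝ) 1, ‖f r‖ ^ 2 * r := by
  have hnonneg : 0 ≤ ∫ r in Ioc (0 : ℝ) 1, ‖f r‖ ^ 2 * r :=
    setIntegral_nonneg measurableSet_Ioc fun r hr => by have := hr.1.le; positivity
  have hlhs : ∫ s in Ioc (0 : ℝ) 1, ‖Tl l f s‖ ^ 2 * s
      ≤ (∫⁻ s in Ioc 0 1, ‖Tl l f s‖ₑ ^ 2 * ENNReal.ofReal s).toReal := by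
    refine (Real.le_norm_self _).trans ((norm_integral_le_lintegral_norm _).trans_eq ?_)
    congr 1
    refine setLIntegral_congr_fun measurableSet_Ioc fun s hs => ?_
    rw [Real.norm_of_nonneg (by have := hs.1.le; positivity), ofReal_norm_sq_mul]
  have hrhs : ∫⁻ r in Ioc 0 1, ‖f r‖ₑ ^ 2 * ENNReal.ofReal r
      = ENNReal.ofReal (∫ r in Ioc (0 : ℝ) 1, ‖f r‖ ^ 2 * r) := by
    simp_rw [← ofReal_norm_sq_mul]
    exact (ofReal_integral_eq_lintegral_ofReal hf
      ((ae_restrict_mem measurableSet_Ioc).mono fun r hr => by have := hr.1.le; positivity)).symm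
  calc ∫ s in Ioc (0 : ℝ) 1, ‖Tl l f s‖ ^ 2 * s
      ≤ (∫⁻ r in Ioc 0 1, ‖f r‖ₑ ^ 2 * ENNReal.ofReal r).toReal :=
        hlhs.trans (ENNReal.toReal_mono (hrhs ▸ ENNReal.ofReal_ne_top)
          (lintegral_enorm_Tl_sq_le l hfm.enorm))
    _ = ∫ r in Ioc (0 : ℝ) 1, ‖f r‖ ^ 2 * r := by rw [hrhs, ENNReal.toReal_ofReal hnonneg]
    _ ≤ 9 / 4 * ∫ r in Ioc (0 : ℝ) 1, ‖f r‖ ^ 2 * r := by linarith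

/-- For every `l ≥ 1`, `T_l` is bounded on `L²([0,1], r dr)` with
`‖T_l f‖² ≤ (9/4) ‖f‖²`, uniformly in `l`. -/
theorem Tl_pos_bounded (l : ℕ) (hl : 1 ≤ l) (f : ℝ → ℂ)
    (hfm : AEStronglyMeasurable f (volume.restrict (Set.Ioc (0:ℝ) 1)))
    (hf : IntegrableOn (fun r : ℝ => ‖f r‖ ^ 2 * r) (Set.Ioc (0:ℝ) 1)) :
    (∫ s in Set.Ioc (0:ℝ) 1, ‖Tl l f s‖ ^ 2 * s)
      ≤ (9 / 4) * ∫ r in Set.Ioc (0:ℝ) 1, ‖f r‖ ^ 2 * r :=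
  Tl_pos_bounded_general l f hfm hf
end

section
/- If Q is a multiplier of the Dirichlet space 𝒟, then (1 − |z|²)|Q′(z)| ≤ ‖M_Q‖ for all z in the open unit disk 𝔻, where ‖M_Q‖ is the norm of the multiplication operator M_Q on 𝒟. -/
open Metric MeasureTheory Complex

/-- Taylor coefficient at 0. -/
noncomputable def dirCoeff (f : ℂ → ℂ) (n : ℕ) : ℂ :=
  iteratedDeriv n f 0 / (n.factorial : ℂ)

/-- Membership in the Dirichlet space. -/
def MemDirichlet (f : ℂ → ℂ) : Prop :=
  DifferentiableOn ℂ f (ball (0:ℂ) 1) ∧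
  Summable (fun n : ℕ => ((n : ℝ) + 1) * ‖dirCoeff f n‖ ^ 2)

/-- Squared Dirichlet norm. -/
noncomputable def dirNormSq (f : ℂ → ℂ) : ℝ :=
  ∑' n : ℕ, ((n : ℝ) + 1) * ‖dirCoeff f n‖ ^ 2

/-- Multiplier of the Dirichlet space. -/
def IsMultiplier (φ : ℂ → ℂ) : Prop :=
  DifferentiableOn ℂ φ (ball (0:ℂ) 1) ∧
  ∀ f, MemDirichlet f → MemDirichlet (fun z => φ z * f z)

/-- Operator norm of the multiplication operator. -/
noncomputable def multNorm (φ : ℂ → ℂ) : ℝ :=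
  sInf {C : ℝ | 0 ≤ C ∧ ∀ f, MemDirichlet f →
    dirNormSq (fun z => φ z * f z) ≤ C ^ 2 * dirNormSq f}

/-- The column operator of `F` has norm at most `C`. -/
def ColNormLE (F : ℕ → ℂ → ℂ) (C : ℝ) : Prop :=
  ∀ h, MemDirichlet h →
    Summable (fun j : ℕ => dirNormSq (fun z => F j z * h z)) ∧
    (∑' j : ℕ, dirNormSq (fun z => F j z * h z)) ≤ C ^ 2 * dirNormSq h

/-!
With `aₙ` the Taylor coefficients of `Q`, `Q'(z) = ∑ (n+1) aₙ₊₁ zⁿ`, and Cauchy–Schwarz gives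
`|Q'(z)|² ≤ (∑ (n+1) |aₙ₊₁|²) (∑ (n+1) |z|²ⁿ) ≤ ‖Q‖²_𝒟 / (1 - |z|²)²`.
Moreover `‖Q‖_𝒟 = ‖M_Q 1‖_𝒟 ≤ C` for every admissible bound `C` of `M_Q`.

Since `multNorm` is an infimum, which is `0` for an empty set of bounds, one also needs that `M_Q`
is bounded at all. In the orthonormal basis `zⁿ / √(n+1)` of `𝒟`, `M_Q` is a lower triangular
matrix that maps `ℓ²` into itself, so it is bounded by the closed graph theorem.
-/

open FormalMultilinearSeries
open scoped ENNReal

theorem summable_and_tsum_mul_le_sqrt_mul_sqrt {ι : Type*} {u v : ι → ℝ}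
    (hu : Summable fun i => u i ^ 2) (hv : Summable fun i => v i ^ 2) :
    Summable (fun i => u i * v i) ∧
      ∑' i, u i * v i ≤ √(∑' i, u i ^ 2) * √(∑' i, v i ^ 2) := by
  have huv : Summable (fun i => u i * v i) := by
    refine .of_norm_bounded ((hu.add hv).div_const 2) fun i => ?_
    rw [Real.norm_eq_abs, abs_mul]
    nlinarith [sq_abs (u i), sq_abs (v i), sq_nonneg (|u i| - |v i|)]
  refine ⟨huv, huv.tsum_le_of_sum_le fun s => ?_⟩
  refine (Real.sum_mul_le_sqrt_mul_sqrt s u v).trans ?_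
  gcongr
  · exact hu.sum_le_tsum s fun i _ => sq_nonneg _
  · exact hv.sum_le_tsum s fun i _ => sq_nonneg _

section LpSpace

variable {ι : Type*} {E : ι → Type*} [∀ i, NormedAddCommGroup (E i)]

theorem memℓp_two_iff_summable_sq {f : ∀ i, E i} : Memℓp f 2 ↔ Summable fun i => ‖f i‖ ^ 2 := by
  simpa using memℓp_gen_iff (p := 2) (f := f) (by norm_num)

theorem lp.norm_sq_eq_tsum (f : lp E 2) :
    ‖f‖ ^ 2 = ∑' i, ‖f i‖ ^ 2 := by
  simpa using lp.norm_rpow_eq_tsum (p := 2) (by norm_num) f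

end LpSpace

theorem exists_continuousLinearMap_lp_of_rowFinite {ι 𝕜 : Type*} [NontriviallyNormedField 𝕜]
    [CompleteSpace 𝕜] {p : ℝ≥0∞} [Fact (1 ≤ p)] (s : ι → Finset ι) (M : ι → ι → 𝕜)
    (hM : ∀ b : lp (fun _ : ι => 𝕜) p, Memℓp (fun i => ∑ k ∈ s i, M i k * b k) p) :
    ∃ T : lp (fun _ : ι => 𝕜) p →L[𝕜] lp (fun _ : ι => 𝕜) p,
      ∀ b i, T b i = ∑ k ∈ s i, M i k * b k := by
  let L : lp (fun _ : ι => 𝕜) p →ₗ[𝕜] lp (fun _ : ι => 𝕜) p :=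
    { toFun := fun b => ⟨_, hM b⟩
      map_add' := fun b c => lp.ext <| funext fun i => by
        show ∑ k ∈ s i, M i k * (b + c) k = ∑ k ∈ s i, M i k * b k + ∑ k ∈ s i, M i k * c k
        simp [mul_add, Finset.sum_add_distrib]
      map_smul' := fun c b => lp.ext <| funext fun i => by
        simp [Finset.mul_sum, mul_left_comm] }
  have hcoord (i : ι) : Continuous fun b : lp (fun _ : ι => 𝕜) p => b i :=
    (lp.evalCLM 𝕜 (fun _ : ι => 𝕜) p i).continuous
  refine ⟨.ofSeqClosedGraph (g := L) fun u x y hux huy => lp.ext <| funext fun i => ?_,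
    fun _ _ => rfl⟩
  refine tendsto_nhds_unique (((hcoord i).tendsto y).comp huy) ?_
  exact tendsto_finsetSum _ fun k _ => (((hcoord k).tendsto x).comp hux).const_mul _

theorem hasFPowerSeriesOnBall_ofScalarsSum_of_bounded {𝕜 : Type*} [NontriviallyNormedField 𝕜]
    [CompleteSpace 𝕜] {c : ℕ → 𝕜} {C : ℝ} (hc : ∀ n, ‖c n‖ ≤ C) :
    HasFPowerSeriesOnBall (ofScalarsSum (E := 𝕜) c) (ofScalars 𝕜 c) 0 1 := by
  have hr : ((1 : NNReal) : ℝ≥0∞) ≤ (ofScalars 𝕜 c).radius :=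
    (ofScalars 𝕜 c).le_radius_of_bound C fun n => by simpa [ofScalars_norm] using hc n
  exact ((ofScalars 𝕜 c).hasFPowerSeriesOnBall (zero_lt_one.trans_le hr)).mono one_pos hr

theorem hasSum_succ_mul_geometric {𝕜 : Type*} [NontriviallyNormedField 𝕜] [CompleteSpace 𝕜]
    {x : 𝕜} (hx : ‖x‖ < 1) : HasSum (fun n : ℕ => (n + 1) * x ^ n) (1 / (1 - x) ^ 2) := by
  simpa using hasSum_choose_mul_geometric_of_norm_lt_one 1 hx

section TaylorCoefficients

variable {f g : ℂ → ℂ}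

theorem hasSum_dirCoeff_mul_pow (hf : DifferentiableOn ℂ f (ball 0 1)) {z : ℂ}
    (hz : z ∈ ball (0 : ℂ) 1) : HasSum (fun n => dirCoeff f n * z ^ n) (f z) := by
  refine (Complex.hasSum_taylorSeries_on_ball hf hz).congr_fun fun n => ?_
  simp only [dirCoeff, sub_zero, smul_eq_mul]
  ring

theorem dirCoeff_eq_of_hasFPowerSeriesAt {a : ℕ → ℂ} (h : HasFPowerSeriesAt f (ofScalars ℂ a) 0) :
    dirCoeff f = a :=
  ofScalars_series_injective ℂ ℂ (h.analyticAt.hasFPowerSeriesAt.eq_formalMultilinearSeries h)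

theorem dirCoeff_mul (hf : DifferentiableOn ℂ f (ball 0 1)) (hg : DifferentiableOn ℂ g (ball 0 1))
    (n : ℕ) : dirCoeff (fun z => f z * g z) n =
      ∑ k ∈ Finset.range (n + 1), dirCoeff f k * dirCoeff g (n - k) := by
  have h0 : ball (0 : ℂ) 1 ∈ nhds 0 := ball_mem_nhds 0 one_pos
  rw [dirCoeff, iteratedDeriv_fun_mul (hf.analyticAt h0).contDiffAt (hg.analyticAt h0).contDiffAt,
    Finset.sum_div]
  refine Finset.sum_congr rfl fun k hk => ?_
  have hkn : k ≤ n := Nat.lt_succ_iff.mp (Finset.mem_range.mp hk)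
  rw [dirCoeff, dirCoeff, Nat.cast_choose ℂ hkn]
  have : (n.factorial : ℂ) ≠ 0 := by exact_mod_cast n.factorial_ne_zero
  field_simp

theorem dirCoeff_deriv (n : ℕ) : dirCoeff (deriv f) n = (n + 1) * dirCoeff f (n + 1) := by
  simp only [dirCoeff, ← iteratedDeriv_succ', Nat.factorial_succ]
  push_cast
  field_simp

theorem dirCoeff_const (c : ℂ) (n : ℕ) :
    dirCoeff (fun _ => c) n = if n = 0 then c else 0 := by
  split_ifs with h <;> simp [dirCoeff, iteratedDeriv_const, h]

end TaylorCoefficients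

theorem memDirichlet_one : MemDirichlet (fun _ => 1) := by
  refine ⟨differentiableOn_const 1, summable_of_ne_finset_zero (s := {0}) fun n hn => ?_⟩
  simp [dirCoeff_const, Finset.mem_singleton.not.mp hn]

theorem dirNormSq_one : dirNormSq (fun _ => 1) = 1 := by
  rw [dirNormSq, tsum_eq_single 0 fun n hn => by simp [dirCoeff_const, hn]]
  simp [dirCoeff_const]

section DerivativeBound

variable {f : ℂ → ℂ}

theorem hasSum_deriv_dirCoeff (hf : DifferentiableOn ℂ f (ball 0 1)) {z : ℂ}
    (hz : z ∈ ball (0 : ℂ) 1) :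
    HasSum (fun n => (n + 1) * dirCoeff f (n + 1) * z ^ n) (deriv f z) := by
  simpa only [dirCoeff_deriv] using hasSum_dirCoeff_mul_pow (hf.deriv isOpen_ball) hz

theorem summable_and_tsum_shift_le_dirNormSq (hf : MemDirichlet f) :
    Summable (fun n : ℕ => ((n : ℝ) + 1) * ‖dirCoeff f (n + 1)‖ ^ 2) ∧
      ∑' n : ℕ, ((n : ℝ) + 1) * ‖dirCoeff f (n + 1)‖ ^ 2 ≤ dirNormSq f := by
  have hshift := (summable_nat_add_iff 1).mpr hf.2
  have hle : ∀ n : ℕ, ((n : ℝ) + 1) * ‖dirCoeff f (n + 1)‖ ^ 2 ≤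
      ((↑(n + 1) : ℝ) + 1) * ‖dirCoeff f (n + 1)‖ ^ 2 := fun n => by
    push_cast; gcongr; linarith
  have hsum := Summable.of_nonneg_of_le (fun n => by positivity) hle hshift
  refine ⟨hsum, (hsum.tsum_le_tsum hle hshift).trans ?_⟩
  rw [dirNormSq, hf.2.tsum_eq_zero_add]
  linarith [show (0 : ℝ) ≤ ((0 : ℕ) + 1) * ‖dirCoeff f 0‖ ^ 2 by positivity]

theorem one_sub_sq_mul_norm_deriv_le (hf : MemDirichlet f) {z : ℂ} (hz : z ∈ ball (0 : ℂ) 1) :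
    (1 - ‖z‖ ^ 2) * ‖deriv f z‖ ≤ √(dirNormSq f) := by
  set r := ‖z‖
  have hr2 : r ^ 2 < 1 := pow_lt_one₀ (norm_nonneg z) (mem_ball_zero_iff.mp hz) two_ne_zero
  have hpos : 0 < 1 - r ^ 2 := by linarith
  set u : ℕ → ℝ := fun n => √((n : ℝ) + 1) * ‖dirCoeff f (n + 1)‖
  set v : ℕ → ℝ := fun n => √((n : ℝ) + 1) * r ^ n
  have hsq : ∀ n : ℕ, √((n : ℝ) + 1) ^ 2 = n + 1 := fun n => Real.sq_sqrt (by positivity)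
  have hu : (fun n => u n ^ 2) = fun n : ℕ => ((n : ℝ) + 1) * ‖dirCoeff f (n + 1)‖ ^ 2 := by
    funext n; simp only [u, mul_pow, hsq]
  have hv : HasSum (fun n => v n ^ 2) (1 / (1 - r ^ 2) ^ 2) := by
    refine (hasSum_succ_mul_geometric (x := r ^ 2) ?_).congr_fun fun n => ?_
    · rwa [Real.norm_of_nonneg (by positivity)]
    · simp only [v, mul_pow, hsq, ← pow_mul, mul_comm 2 n]
  obtain ⟨hu_sum, hu_le⟩ := summable_and_tsum_shift_le_dirNormSq hf
  rw [← hu] at hu_sum hu_le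
  obtain ⟨huv, hcs⟩ := summable_and_tsum_mul_le_sqrt_mul_sqrt hu_sum hv.summable
  have hterm : ∀ n : ℕ, ‖(n + 1) * dirCoeff f (n + 1) * z ^ n‖ = u n * v n := fun n => by
    rw [norm_mul, norm_mul, norm_pow, ← Nat.cast_succ, Complex.norm_natCast, Nat.cast_succ]
    linear_combination (-(‖dirCoeff f (n + 1)‖ * r ^ n)) * hsq n
  have hderiv : ‖deriv f z‖ ≤ ∑' n, u n * v n := by
    rw [← (hasSum_deriv_dirCoeff hf.1 hz).tsum_eq]
    exact tsum_of_norm_bounded huv.hasSum fun n => (hterm n).le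
  calc (1 - r ^ 2) * ‖deriv f z‖
      ≤ (1 - r ^ 2) * (√(dirNormSq f) * √(1 / (1 - r ^ 2) ^ 2)) := by
        gcongr
        refine hderiv.trans (hcs.trans ?_)
        rw [hv.tsum_eq]
        gcongr
    _ = √(dirNormSq f) := by
        rw [← one_div_pow, Real.sqrt_sq (by positivity)]
        field_simp

end DerivativeBound

section LpModel

-- `f ↦ (dirWeight n * dirCoeff f n)ₙ` is an isometry of `𝒟` onto `ℓ²`.
noncomputable def dirWeight (n : ℕ) : ℂ := (√((n : ℝ) + 1) : ℂ)

theorem dirWeight_ne_zero (n : ℕ) : dirWeight n ≠ 0 := by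
  simp only [dirWeight, ne_eq, Complex.ofReal_eq_zero]
  positivity

theorem norm_dirWeight_mul_sq (n : ℕ) (c : ℂ) :
    ‖dirWeight n * c‖ ^ 2 = ((n : ℝ) + 1) * ‖c‖ ^ 2 := by
  rw [norm_mul, mul_pow, dirWeight, Complex.norm_real, Real.norm_eq_abs, sq_abs,
    Real.sq_sqrt (by positivity)]

variable {f : ℂ → ℂ}

theorem memℓp_dirWeight_mul_dirCoeff (hf : MemDirichlet f) :
    Memℓp (fun n => dirWeight n * dirCoeff f n) 2 :=
  memℓp_two_iff_summable_sq.mpr (by simpa only [norm_dirWeight_mul_sq] using hf.2)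

theorem exists_memDirichlet_dirWeight_mul_dirCoeff_eq (b : lp (fun _ : ℕ => ℂ) 2) :
    ∃ g, MemDirichlet g ∧ ∀ n, dirWeight n * dirCoeff g n = b n := by
  set c : ℕ → ℂ := fun n => b n / dirWeight n
  have hc (n : ℕ) : ‖c n‖ ≤ ‖b‖ := by
    rw [norm_div]
    refine (div_le_self (norm_nonneg _) ?_).trans (lp.norm_apply_le_norm two_ne_zero b n)
    simp only [dirWeight, Complex.norm_real, Real.norm_eq_abs,
      abs_of_nonneg (Real.sqrt_nonneg _), Real.one_le_sqrt]
    linarith [n.cast_nonneg (α := ℝ)]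
  have hg := hasFPowerSeriesOnBall_ofScalarsSum_of_bounded hc
  have hcoeff := dirCoeff_eq_of_hasFPowerSeriesAt hg.hasFPowerSeriesAt
  have hw (n : ℕ) : dirWeight n * dirCoeff (ofScalarsSum (E := ℂ) c) n = b n := by
    rw [hcoeff, mul_div_cancel₀ _ (dirWeight_ne_zero n)]
  refine ⟨_, ⟨?_, ?_⟩, hw⟩
  · simpa [← ENNReal.coe_one, Metric.eball_coe] using hg.differentiableOn
  · simpa only [← norm_dirWeight_mul_sq, hw] using
      memℓp_two_iff_summable_sq.mp (lp.memℓp b)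

theorem IsMultiplier.exists_bound {Q : ℂ → ℂ} (hQ : IsMultiplier Q) :
    ∃ C, 0 ≤ C ∧ ∀ f, MemDirichlet f →
      dirNormSq (fun z => Q z * f z) ≤ C ^ 2 * dirNormSq f := by
  let M : ℕ → ℕ → ℂ := fun j k => dirWeight j * dirCoeff Q (j - k) / dirWeight k
  have hM {f : ℂ → ℂ} (hf : DifferentiableOn ℂ f (ball 0 1)) (j : ℕ) :
      ∑ k ∈ Finset.range (j + 1), M j k * (dirWeight k * dirCoeff f k) =
        dirWeight j * dirCoeff (fun z => Q z * f z) j := by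
    simp_rw [mul_comm (Q _), dirCoeff_mul hf hQ.1, Finset.mul_sum]
    refine Finset.sum_congr rfl fun k _ => ?_
    simp only [M]
    field_simp [dirWeight_ne_zero k]
  obtain ⟨T, hT⟩ := exists_continuousLinearMap_lp_of_rowFinite (fun j => Finset.range (j + 1)) M
    fun b => by
      obtain ⟨g, hg, hgb⟩ := exists_memDirichlet_dirWeight_mul_dirCoeff_eq b
      simpa only [← hgb, hM hg.1] using memℓp_dirWeight_mul_dirCoeff (hQ.2 g hg)
  refine ⟨‖T‖, norm_nonneg T, fun f hf => ?_⟩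
  let b : lp (fun _ : ℕ => ℂ) 2 := ⟨_, memℓp_dirWeight_mul_dirCoeff hf⟩
  have hb : ‖b‖ ^ 2 = dirNormSq f := by
    rw [lp.norm_sq_eq_tsum]
    exact tsum_congr fun n => norm_dirWeight_mul_sq n _
  have hTb : ‖T b‖ ^ 2 = dirNormSq (fun z => Q z * f z) := by
    rw [lp.norm_sq_eq_tsum]
    refine tsum_congr fun j => ?_
    rw [hT, ← norm_dirWeight_mul_sq]
    exact congrArg (‖·‖ ^ 2) (hM hf.1 j)
  rw [← hb, ← hTb, ← mul_pow]
  exact pow_le_pow_left₀ (norm_nonneg _) (T.le_opNorm b) 2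

end LpModel

/-- Lemma 4: for a multiplier `Q` of the Dirichlet space,
`(1 − |z|²)|Q'(z)| ≤ ‖M_Q‖` on the unit disk. -/
theorem multiplier_deriv_bound (Q : ℂ → ℂ) (hQ : IsMultiplier Q) :
    ∀ z ∈ ball (0:ℂ) 1, (1 - ‖z‖ ^ 2) * ‖deriv Q z‖ ≤ multNorm Q := by
  intro z hz
  have hQ_mem : MemDirichlet Q := by simpa using hQ.2 _ memDirichlet_one
  refine le_csInf hQ.exists_bound fun C ⟨hC, hCQ⟩ => ?_
  have hQ_norm : dirNormSq Q ≤ C ^ 2 := by simpa [dirNormSq_one] using hCQ _ memDirichlet_one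
  calc (1 - ‖z‖ ^ 2) * ‖deriv Q z‖
      ≤ √(dirNormSq Q) := one_sub_sq_mul_norm_deriv_le hQ_mem hz
    _ ≤ √(C ^ 2) := Real.sqrt_le_sqrt hQ_norm
    _ = C := Real.sqrt_sq hC
end
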